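/- Let E ⊆ ℝ^d be a set whose closure has Lebesgue measure zero, R a cube, and M(R) a largest empty dyadic subcube. Define 𝒟₀(R,E) = {Q ∈ 𝒟(R) : Q ∩ E ≠ ∅ and |Q| ≤ |M(R)|}. Then ∑_{Q ∈ 𝒟₀(R,E)} |Q| = ∑_{Q' ∈ ℱ(R,E)} |Q'| · log₂(ℓ(M(R))/ℓ(Q')). -/

import Mathlib

/-!
Every `Q ∈ 𝒟₀(R,E)` is, up to the null set `closure E`, the disjoint union of the cubes of
`ℱ(R,E)` it contains: through a point `x ∈ Q \ closure E` follow the dyadic chain down to the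
first cube missing `E`. Exchanging the order of summation, each `Q' ∈ ℱ(R,E)` is counted once for
every dyadic ancestor that meets `E` and is no larger than `M(R)`. These are exactly the ancestors
from the generation of `M(R)` down to the parent of `Q'`, and there are `log₂ (ℓ(M(R)) / ℓ(Q'))`
of them.
-/

open MeasureTheory Metric

/-- A half-open axis-parallel cube in `ℝ^d`: `[a₁, a₁+l) × ⋯ × [a_d, a_d+l)`. -/
structure Cube (d : ℕ) where
  a : Fin d → ℝ
  l : ℝ
  l_pos : 0 < l

/-- The underlying point set of a cube. -/
def Cube.set {d : ℕ} (Q : Cube d) : Set (EuclideanSpace ℝ (Fin d)) :=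
  {x | ∀ i, Q.a i ≤ x i ∧ x i < Q.a i + Q.l}

/-- `Q` is a dyadic subcube of `R`: a member of `𝒟_j(R)` for some `j ≥ 0`. -/
def IsDyadicSubcube {d : ℕ} (R Q : Cube d) : Prop :=
  ∃ j : ℕ, ∃ k : Fin d → ℕ, (∀ i, k i < 2 ^ j) ∧ Q.l = R.l / 2 ^ j ∧
    ∀ i, Q.a i = R.a i + (k i : ℝ) * (R.l / 2 ^ j)

/-- `Q' ∈ ℱ(R,E)`: a maximal dyadic subcube of `R` avoiding `E`, i.e.
`Q' ∩ E = ∅` and its dyadic parent `πQ'` meets `E`. -/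
def IsMaxEmpty {d : ℕ} (R : Cube d) (E : Set (EuclideanSpace ℝ (Fin d))) (Q' : Cube d) : Prop :=
  IsDyadicSubcube R Q' ∧ Q'.set ∩ E = ∅ ∧
    ∃ P : Cube d, IsDyadicSubcube R P ∧ P.l = 2 * Q'.l ∧ Q'.set ⊆ P.set ∧ (P.set ∩ E).Nonempty

/-- `M = M(R)`: a largest dyadic subcube of `R` containing no point of `E`. -/
def IsLargestEmptyDyadic {d : ℕ} (R : Cube d) (E : Set (EuclideanSpace ℝ (Fin d)))
    (M : Cube d) : Prop :=
  IsDyadicSubcube R M ∧ M.set ∩ E = ∅ ∧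
    ∀ Q : Cube d, IsDyadicSubcube R Q → Q.set ∩ E = ∅ → Q.l ≤ M.l

/-- Weak porosity of `E ⊆ ℝ^d`. -/
def WeaklyPorous {d : ℕ} (E : Set (EuclideanSpace ℝ (Fin d))) : Prop :=
  ∃ c δ : ℝ, 0 < c ∧ c < 1 ∧ 0 < δ ∧ δ < 1 ∧
    ∀ R : Cube d, ∃ M : Cube d, IsLargestEmptyDyadic R E M ∧
      ∃ F : Finset (Cube d),
        (↑F : Set (Cube d)).Pairwise (fun Q Q' => Disjoint Q.set Q'.set) ∧
        (∀ Q ∈ F, IsDyadicSubcube R Q ∧ Q.set ∩ E = ∅ ∧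
          ENNReal.ofReal δ * volume M.set ≤ volume Q.set) ∧
        ENNReal.ofReal c * volume R.set ≤ ∑ Q ∈ F, volume Q.set

namespace Cube

variable {d : ℕ}

lemma set_eq_preimage (Q : Cube d) : Q.set = (MeasurableEquiv.toLp 2 (Fin d → ℝ)).symm ⁻¹'
    Set.univ.pi fun i => Set.Ico (Q.a i) (Q.a i + Q.l) := by
  ext x
  simp [Cube.set, MeasurableEquiv.toLp_symm_apply, Set.mem_pi]

lemma measurableSet_set (Q : Cube d) : MeasurableSet Q.set := by
  rw [set_eq_preimage]
  exact (MeasurableEquiv.toLp 2 _).symm.measurable (.univ_pi fun _ => measurableSet_Ico)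

lemma volume_set (Q : Cube d) : volume Q.set = ENNReal.ofReal (Q.l ^ d) := by
  rw [set_eq_preimage,
    (EuclideanSpace.volume_preserving_symm_measurableEquiv_toLp (Fin d)).measure_preimage
      (MeasurableSet.univ_pi fun _ => measurableSet_Ico).nullMeasurableSet, volume_pi_pi]
  simp [Real.volume_Ico, ← ENNReal.ofReal_pow Q.l_pos.le]

lemma toLp_a_mem (Q : Cube d) : WithLp.toLp 2 Q.a ∈ Q.set :=
  fun _ => ⟨le_rfl, by linarith [Q.l_pos]⟩

lemma dist_le {Q : Cube d} {x y : EuclideanSpace ℝ (Fin d)} (hx : x ∈ Q.set) (hy : y ∈ Q.set) :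
    dist x y ≤ √d * Q.l := by
  have hcoord (i : Fin d) : dist (x i) (y i) ^ 2 ≤ Q.l ^ 2 := by
    obtain ⟨hx₁, hx₂⟩ := hx i
    obtain ⟨hy₁, hy₂⟩ := hy i
    rw [Real.dist_eq, sq_abs]
    nlinarith
  calc dist x y = √(∑ i, dist (x i) (y i) ^ 2) := EuclideanSpace.dist_eq x y
    _ ≤ √(∑ _i : Fin d, Q.l ^ 2) := Real.sqrt_le_sqrt (Finset.sum_le_sum fun i _ => hcoord i)
    _ = √d * Q.l := by simp [Real.sqrt_mul, Q.l_pos.le]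

lemma volume_le_volume {Q Q' : Cube d} (h : Q.l ≤ Q'.l) : volume Q.set ≤ volume Q'.set := by
  rw [volume_set, volume_set]
  exact ENNReal.ofReal_le_ofReal (pow_le_pow_left₀ Q.l_pos.le h d)

lemma l_le_of_volume_le {Q Q' : Cube d} (hd : d ≠ 0) (h : volume Q.set ≤ volume Q'.set) :
    Q.l ≤ Q'.l := by
  rwa [volume_set, volume_set, ENNReal.ofReal_le_ofReal_iff (by have := Q'.l_pos; positivity),
    pow_le_pow_iff_left₀ Q.l_pos.le Q'.l_pos.le hd] at h

noncomputable def dyadic (R : Cube d) (j : ℕ) (k : Fin d → ℕ) : Cube d :=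
  ⟨fun i => R.a i + k i * (R.l / 2 ^ j), R.l / 2 ^ j, by have := R.l_pos; positivity⟩

/-- The position of the generation-`j` dyadic subcube of `R` containing `x`. -/
noncomputable def dyadicIndex (R : Cube d) (j : ℕ) (x : EuclideanSpace ℝ (Fin d)) : Fin d → ℕ :=
  fun i => ⌊(x i - R.a i) / (R.l / 2 ^ j)⌋₊

@[simp] lemma dyadic_l (R : Cube d) (j : ℕ) (k : Fin d → ℕ) : (R.dyadic j k).l = R.l / 2 ^ j := rfl

lemma mem_dyadic_iff {R : Cube d} {j : ℕ} {k : Fin d → ℕ} {x : EuclideanSpace ℝ (Fin d)} :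
    x ∈ (R.dyadic j k).set ↔ (∀ i, R.a i ≤ x i) ∧ R.dyadicIndex j x = k := by
  have hs : 0 < R.l / 2 ^ j := (R.dyadic j k).l_pos
  simp only [Cube.set, dyadic, dyadicIndex, funext_iff, ← forall_and]
  refine forall_congr' fun i => ?_
  constructor
  · rintro ⟨h₁, h₂⟩
    have hxa : R.a i ≤ x i := by nlinarith
    refine ⟨hxa, (Nat.floor_eq_iff (div_nonneg (by linarith) hs.le)).2 ⟨?_, ?_⟩⟩
    · rw [le_div_iff₀ hs]; linarith
    · rw [div_lt_iff₀ hs]; linarith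
  · rintro ⟨hxa, hk⟩
    obtain ⟨h₁, h₂⟩ := (Nat.floor_eq_iff (div_nonneg (by linarith) hs.le)).1 hk
    rw [le_div_iff₀ hs] at h₁
    rw [div_lt_iff₀ hs] at h₂
    constructor <;> linarith

lemma dyadicIndex_lt {R : Cube d} {x : EuclideanSpace ℝ (Fin d)} (hx : x ∈ R.set) (j : ℕ)
    (i : Fin d) : R.dyadicIndex j x i < 2 ^ j := by
  obtain ⟨h₁, h₂⟩ := hx i
  have hs : 0 < R.l / 2 ^ j := (R.dyadic j 0).l_pos
  have hl : (2 : ℝ) ^ j * (R.l / 2 ^ j) = R.l := by field_simp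
  rw [dyadicIndex, Nat.floor_lt (div_nonneg (by linarith) hs.le), div_lt_iff₀ hs]
  push_cast
  linarith

lemma mem_dyadic_dyadicIndex {R : Cube d} {x : EuclideanSpace ℝ (Fin d)} (hx : x ∈ R.set)
    (j : ℕ) : x ∈ (R.dyadic j (R.dyadicIndex j x)).set :=
  mem_dyadic_iff.2 ⟨fun i => (hx i).1, rfl⟩

lemma dyadic_subset {R : Cube d} {j : ℕ} {k : Fin d → ℕ} (hk : ∀ i, k i < 2 ^ j) :
    (R.dyadic j k).set ⊆ R.set := by
  intro x hx i
  obtain ⟨hxa, rfl⟩ := mem_dyadic_iff.1 hx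
  have hs : 0 < R.l / 2 ^ j := (R.dyadic j 0).l_pos
  have hlt := hk i
  have hl : (2 : ℝ) ^ j * (R.l / 2 ^ j) = R.l := by field_simp
  rw [dyadicIndex, Nat.floor_lt (div_nonneg (by linarith [hxa i]) hs.le), div_lt_iff₀ hs] at hlt
  push_cast at hlt
  exact ⟨hxa i, by linarith⟩

lemma dyadicIndex_eq_div {R : Cube d} {x : EuclideanSpace ℝ (Fin d)} {j j' : ℕ} (hj : j ≤ j') :
    R.dyadicIndex j x = fun i => R.dyadicIndex j' x i / 2 ^ (j' - j) := by
  funext i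
  have hpow : (2 : ℝ) ^ j' = 2 ^ j * 2 ^ (j' - j) := by rw [← pow_add, Nat.add_sub_cancel' hj]
  rw [dyadicIndex, dyadicIndex, ← Nat.floor_div_natCast, Nat.cast_pow, Nat.cast_two, hpow]
  congr 1
  have := R.l_pos
  field_simp

lemma dyadic_subset_dyadic {R : Cube d} {j j' : ℕ} {k k' : Fin d → ℕ}
    {x : EuclideanSpace ℝ (Fin d)} (hj : j ≤ j') (hx : x ∈ (R.dyadic j k).set)
    (hx' : x ∈ (R.dyadic j' k').set) : (R.dyadic j' k').set ⊆ (R.dyadic j k).set := by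
  intro y hy
  obtain ⟨-, rfl⟩ := mem_dyadic_iff.1 hx
  obtain ⟨-, rfl⟩ := mem_dyadic_iff.1 hx'
  obtain ⟨hya, hy⟩ := mem_dyadic_iff.1 hy
  exact mem_dyadic_iff.2 ⟨hya, by rw [dyadicIndex_eq_div hj, dyadicIndex_eq_div hj, hy]⟩

lemma eq_of_mem_dyadic {R : Cube d} {j : ℕ} {k k' : Fin d → ℕ} {x : EuclideanSpace ℝ (Fin d)}
    (hx : x ∈ (R.dyadic j k).set) (hx' : x ∈ (R.dyadic j k').set) : k = k' :=
  (mem_dyadic_iff.1 hx).2.symm.trans (mem_dyadic_iff.1 hx').2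

lemma div_two_pow_le_div_two_pow_iff {l : ℝ} (hl : 0 < l) {j j' : ℕ} :
    l / 2 ^ j ≤ l / 2 ^ j' ↔ j' ≤ j := by
  rw [div_le_div_iff_of_pos_left hl (by positivity) (by positivity),
    pow_le_pow_iff_right₀ one_lt_two]

lemma div_two_pow_injective {l : ℝ} (hl : 0 < l) : Function.Injective fun j : ℕ => l / 2 ^ j :=
  fun _ _ h => le_antisymm ((div_two_pow_le_div_two_pow_iff hl).1 h.ge)
    ((div_two_pow_le_div_two_pow_iff hl).1 h.le)

lemma two_mul_div_two_pow_succ (l : ℝ) (j : ℕ) : 2 * (l / 2 ^ (j + 1)) = l / 2 ^ j := by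
  field_simp
  ring

end Cube

open Cube

section

variable {d : ℕ}

lemma isDyadicSubcube_iff {R Q : Cube d} :
    IsDyadicSubcube R Q ↔ ∃ j k, (∀ i, k i < 2 ^ j) ∧ Q = R.dyadic j k := by
  constructor
  · rintro ⟨j, k, hk, hl, ha⟩
    obtain ⟨a, l, _⟩ := Q
    obtain rfl : a = _ := funext ha
    exact ⟨j, k, hk, by simp_all [dyadic]⟩
  · rintro ⟨j, k, hk, rfl⟩
    exact ⟨j, k, hk, rfl, fun _ => rfl⟩

lemma IsDyadicSubcube.set_subset {R Q : Cube d} (h : IsDyadicSubcube R Q) : Q.set ⊆ R.set := by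
  obtain ⟨j, k, hk, rfl⟩ := isDyadicSubcube_iff.1 h
  exact dyadic_subset hk

lemma countable_setOf_isDyadicSubcube (R : Cube d) : {Q | IsDyadicSubcube R Q}.Countable :=
  (Set.countable_range fun p : ℕ × (Fin d → ℕ) => R.dyadic p.1 p.2).mono fun _ hQ => by
    obtain ⟨j, k, -, rfl⟩ := isDyadicSubcube_iff.1 hQ
    exact ⟨(j, k), rfl⟩

lemma exists_dyadic_inter_eq_empty {R : Cube d} {E : Set (EuclideanSpace ℝ (Fin d))}
    {x : EuclideanSpace ℝ (Fin d)} (hxR : x ∈ R.set) (hxE : x ∉ closure E) :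
    ∃ j, (R.dyadic j (R.dyadicIndex j x)).set ∩ E = ∅ := by
  obtain ⟨r, hr, hball⟩ := Metric.isOpen_iff.1 isClosed_closure.isOpen_compl x hxE
  obtain ⟨j, hj⟩ := pow_unbounded_of_one_lt (√d * R.l / r) one_lt_two
  refine ⟨j, Set.eq_empty_of_forall_notMem fun y ⟨hyQ, hyE⟩ => hball ?_ (subset_closure hyE)⟩
  calc dist y x ≤ √d * (R.l / 2 ^ j) := dist_le hyQ (mem_dyadic_dyadicIndex hxR j)
    _ < r := by
      rw [div_lt_iff₀ hr] at hj
      rw [mul_div_assoc', div_lt_iff₀ (by positivity)]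
      linarith

lemma exists_isMaxEmpty_mem_subset {R Q : Cube d} {E : Set (EuclideanSpace ℝ (Fin d))}
    (hQ : IsDyadicSubcube R Q) (hQE : (Q.set ∩ E).Nonempty) {x : EuclideanSpace ℝ (Fin d)}
    (hxQ : x ∈ Q.set) (hxE : x ∉ closure E) :
    ∃ Q', IsMaxEmpty R E Q' ∧ x ∈ Q'.set ∧ Q'.set ⊆ Q.set := by
  classical
  obtain ⟨j₀, k₀, hk₀, rfl⟩ := isDyadicSubcube_iff.1 hQ
  have hxR : x ∈ R.set := dyadic_subset hk₀ hxQ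
  set C : ℕ → Cube d := fun j => R.dyadic j (R.dyadicIndex j x)
  have hxC (j : ℕ) : x ∈ (C j).set := mem_dyadic_dyadicIndex hxR j
  have hC₀ : C j₀ = R.dyadic j₀ k₀ := congrArg (R.dyadic j₀) (eq_of_mem_dyadic (hxC j₀) hxQ)
  have hex : ∃ m, (C (j₀ + m)).set ∩ E = ∅ := by
    obtain ⟨j, hj⟩ := exists_dyadic_inter_eq_empty hxR hxE
    exact ⟨j, Set.eq_empty_of_subset_empty <| hj ▸ Set.inter_subset_inter_left E
      (dyadic_subset_dyadic (by omega) (hxC j) (hxC (j₀ + j)))⟩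
  obtain ⟨n, hn⟩ := Nat.exists_eq_succ_of_ne_zero (n := Nat.find hex) fun h =>
    Set.nonempty_iff_ne_empty.1 hQE (by simpa [h, hC₀] using Nat.find_spec hex)
  have hempty : (C (j₀ + n + 1)).set ∩ E = ∅ := by
    have := Nat.find_spec hex
    rwa [hn] at this
  have hparent : (C (j₀ + n)).set ∩ E ≠ ∅ := Nat.find_min hex (by omega)
  refine ⟨C (j₀ + n + 1), ⟨⟨_, _, dyadicIndex_lt hxR _, rfl, fun _ => rfl⟩, hempty,
    C (j₀ + n), ⟨_, _, dyadicIndex_lt hxR _, rfl, fun _ => rfl⟩,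
    (two_mul_div_two_pow_succ _ _).symm, dyadic_subset_dyadic (by omega) (hxC _) (hxC _),
    Set.nonempty_iff_ne_empty.2 hparent⟩, hxC _, ?_⟩
  rw [← hC₀]
  exact dyadic_subset_dyadic (by omega) (hxC _) (hxC _)

namespace IsMaxEmpty

variable {R Q : Cube d} {E : Set (EuclideanSpace ℝ (Fin d))}

lemma exists_dyadic_parent (h : IsMaxEmpty R E Q) :
    ∃ j k kP, Q = R.dyadic (j + 1) k ∧ Q.set ⊆ (R.dyadic j kP).set ∧
      ((R.dyadic j kP).set ∩ E).Nonempty := by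
  obtain ⟨hQ, -, P, hP, hPl, hQP, hPE⟩ := h
  obtain ⟨j', k, -, rfl⟩ := isDyadicSubcube_iff.1 hQ
  obtain ⟨j, kP, -, rfl⟩ := isDyadicSubcube_iff.1 hP
  obtain ⟨n, rfl⟩ : ∃ n, j' = n + 1 := Nat.exists_eq_succ_of_ne_zero fun hj' => by
    have hle := (div_two_pow_le_div_two_pow_iff R.l_pos (j := j) (j' := 0)).2 (Nat.zero_le j)
    simp only [dyadic_l, hj', pow_zero, div_one] at hPl hle
    linarith [R.l_pos]
  obtain rfl : j = n := div_two_pow_injective R.l_pos <| by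
    simpa only [dyadic_l, two_mul_div_two_pow_succ] using hPl
  exact ⟨j, k, kP, rfl, hQP, hPE⟩

lemma l_le_of_mem {Q' : Cube d} (h : IsMaxEmpty R E Q) (h' : IsMaxEmpty R E Q')
    {x : EuclideanSpace ℝ (Fin d)} (hx : x ∈ Q.set) (hx' : x ∈ Q'.set) : Q.l ≤ Q'.l := by
  obtain ⟨j, k, -, rfl⟩ := isDyadicSubcube_iff.1 h.1
  obtain ⟨j', k', kP, rfl, hQP, hPE⟩ := h'.exists_dyadic_parent
  rw [dyadic_l, dyadic_l, div_two_pow_le_div_two_pow_iff R.l_pos, Nat.succ_le_iff]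
  by_contra! hj
  obtain ⟨y, hyP, hyE⟩ := hPE
  have hPQ := dyadic_subset_dyadic hj hx (hQP hx')
  exact (Set.eq_empty_iff_forall_notMem.1 h.2.1) y ⟨hPQ hyP, hyE⟩

lemma eq_of_mem {Q' : Cube d} (h : IsMaxEmpty R E Q) (h' : IsMaxEmpty R E Q')
    {x : EuclideanSpace ℝ (Fin d)} (hx : x ∈ Q.set) (hx' : x ∈ Q'.set) : Q = Q' := by
  have hl := le_antisymm (h.l_le_of_mem h' hx hx') (h'.l_le_of_mem h hx' hx)
  obtain ⟨j, k, -, rfl⟩ := isDyadicSubcube_iff.1 h.1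
  obtain ⟨j', k', -, rfl⟩ := isDyadicSubcube_iff.1 h'.1
  obtain rfl : j = j' := div_two_pow_injective R.l_pos hl
  rw [eq_of_mem_dyadic hx hx']

end IsMaxEmpty

open Classical in
lemma volume_eq_tsum_isMaxEmpty {R Q : Cube d} {E : Set (EuclideanSpace ℝ (Fin d))}
    (hE0 : volume (closure E) = 0) (hQ : IsDyadicSubcube R Q) (hQE : (Q.set ∩ E).Nonempty) :
    volume Q.set = ∑' Q' : {Q' : Cube d // IsMaxEmpty R E Q'},
      if Q'.1.set ⊆ Q.set then volume Q'.1.set else 0 := by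
  have : Countable {Q' // IsMaxEmpty R E Q'} :=
    ((countable_setOf_isDyadicSubcube R).mono fun _ hQ' => hQ'.1).to_subtype
  set F : {Q' // IsMaxEmpty R E Q'} → Set (EuclideanSpace ℝ (Fin d)) :=
    fun Q' => if Q'.1.set ⊆ Q.set then Q'.1.set else ∅
  have hF (Q') : F Q' ⊆ Q'.1.set := by
    simp only [F]
    split_ifs
    exacts [subset_rfl, Set.empty_subset _]
  have hdisj : Pairwise (Function.onFun Disjoint F) := fun Q₁ Q₂ hne =>
    (Set.disjoint_left.2 fun _ hx₁ hx₂ => hne (Subtype.ext (Q₁.2.eq_of_mem Q₂.2 hx₁ hx₂))).mono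
      (hF Q₁) (hF Q₂)
  have hcover : Q.set \ closure E ⊆ ⋃ Q', F Q' := fun x ⟨hxQ, hxE⟩ => by
    obtain ⟨Q', hQ', hxQ', hQ'Q⟩ := exists_isMaxEmpty_mem_subset hQ hQE hxQ hxE
    exact Set.mem_iUnion.2 ⟨⟨Q', hQ'⟩, by simpa [F, hQ'Q] using hxQ'⟩
  have hsub : ⋃ Q', F Q' ⊆ Q.set := Set.iUnion_subset fun Q' => by
    simp only [F]
    split_ifs with h
    exacts [h, Set.empty_subset _]
  calc volume Q.set = volume (⋃ Q', F Q') :=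
        le_antisymm ((measure_sdiff_null hE0).symm.le.trans (measure_mono hcover))
          (measure_mono hsub)
    _ = ∑' Q', volume (F Q') := measure_iUnion hdisj fun Q' => by
        simp only [F]
        split_ifs
        exacts [Q'.1.measurableSet_set, .empty]
    _ = _ := tsum_congr fun Q' => by simp only [F]; split_ifs <;> simp

lemma l_le_of_volume_le_of_inter_nonempty {Q M : Cube d} {E : Set (EuclideanSpace ℝ (Fin d))}
    (hQE : (Q.set ∩ E).Nonempty) (hME : M.set ∩ E = ∅) (h : volume Q.set ≤ volume M.set) :
    Q.l ≤ M.l := by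
  rcases eq_or_ne d 0 with rfl | hd
  · -- in dimension `0` every cube is the whole one-point space
    have hQM : Q.set = M.set := by ext x; simp [Cube.set]
    exact absurd hME (hQM ▸ hQE).ne_empty
  · exact l_le_of_volume_le hd h

lemma tsum_subtype_ite_eq_card_mul {α : Type*} {p q : α → Prop} [DecidablePred q] (s : Finset α)
    (hs : ∀ x, p x ∧ q x ↔ x ∈ s) (c : ENNReal) :
    ∑' x : {x // p x}, (if q x then c else 0) = s.card * c := by
  classical
  rw [← nsmul_eq_mul, ← Finset.sum_const, sum_eq_tsum_indicator]
  refine (tsum_subtype {x | p x} fun x => if q x then c else 0).trans (tsum_congr fun x => ?_)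
  have := hs x
  simp only [Set.indicator_apply, Finset.mem_coe, Set.mem_ofPred_eq]
  split_ifs <;> tauto

open Classical in
lemma tsum_ancestors_isMaxEmpty {R M Q' : Cube d} {E : Set (EuclideanSpace ℝ (Fin d))}
    (hM : IsLargestEmptyDyadic R E M) (hQ' : IsMaxEmpty R E Q') :
    ∑' Q : {Q : Cube d // IsDyadicSubcube R Q ∧ (Q.set ∩ E).Nonempty ∧
        volume Q.set ≤ volume M.set}, (if Q'.set ⊆ Q.1.set then volume Q'.set else 0)
      = volume Q'.set * ENNReal.ofReal (Real.logb 2 (M.l / Q'.l)) := by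
  obtain ⟨jM, kM, -, rfl⟩ := isDyadicSubcube_iff.1 hM.1
  have hMQ' := hM.2.2 Q' hQ'.1 hQ'.2.1
  have hQ'E := hQ'.2.1
  set c : EuclideanSpace ℝ (Fin d) := WithLp.toLp 2 Q'.a
  have hc : c ∈ Q'.set := Q'.toLp_a_mem
  have hcR : c ∈ R.set := hQ'.1.set_subset hc
  obtain ⟨j, k, kP, rfl, hQ'P, hPE⟩ := hQ'.exists_dyadic_parent
  rw [dyadic_l, dyadic_l, div_two_pow_le_div_two_pow_iff R.l_pos] at hMQ'
  set f : ℕ → Cube d := fun m => R.dyadic m (R.dyadicIndex m c)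
  have hf : Function.Injective f := fun _ _ h => div_two_pow_injective R.l_pos (congrArg Cube.l h)
  have hancestors (Q : Cube d) :
      (IsDyadicSubcube R Q ∧ (Q.set ∩ E).Nonempty ∧ volume Q.set ≤ volume (R.dyadic jM kM).set) ∧
        (R.dyadic (j + 1) k).set ⊆ Q.set ↔ Q ∈ (Finset.Ico jM (j + 1)).image f := by
    rw [Finset.mem_image]
    constructor
    · rintro ⟨⟨hQ, hQE, hQM⟩, hQ'Q⟩
      obtain ⟨m, kQ, -, rfl⟩ := isDyadicSubcube_iff.1 hQ
      have hjMm := l_le_of_volume_le_of_inter_nonempty hQE hM.2.1 hQM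
      rw [dyadic_l, dyadic_l, div_two_pow_le_div_two_pow_iff R.l_pos] at hjMm
      have hmj : m < j + 1 := by
        by_contra! hm
        have hQQ' := dyadic_subset_dyadic hm hc (hQ'Q hc)
        exact hQE.ne_empty
          (Set.eq_empty_of_subset_empty (hQ'E ▸ Set.inter_subset_inter_left E hQQ'))
      exact ⟨m, Finset.mem_Ico.2 ⟨hjMm, hmj⟩,
        congrArg (R.dyadic m) (eq_of_mem_dyadic (mem_dyadic_dyadicIndex hcR m) (hQ'Q hc))⟩
    · rintro ⟨m, hm, rfl⟩
      obtain ⟨hjMm, hmj⟩ := Finset.mem_Ico.1 hm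
      have hcf : c ∈ (f m).set := mem_dyadic_dyadicIndex hcR m
      refine ⟨⟨⟨m, _, dyadicIndex_lt hcR m, rfl, fun _ => rfl⟩, ?_, ?_⟩,
        dyadic_subset_dyadic hmj.le hcf hc⟩
      · exact hPE.mono (Set.inter_subset_inter_left E
          (dyadic_subset_dyadic (Nat.le_of_lt_succ hmj) hcf (hQ'P hc)))
      · exact volume_le_volume ((div_two_pow_le_div_two_pow_iff R.l_pos).2 hjMm)
  have hlog : Real.logb 2 ((R.dyadic jM kM).l / (R.dyadic (j + 1) k).l) = ↑(j + 1 - jM) := by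
    have hpow : (2 : ℝ) ^ (j + 1) = 2 ^ jM * 2 ^ (j + 1 - jM) := by
      rw [← pow_add, Nat.add_sub_cancel' hMQ']
    have := R.l_pos
    rw [dyadic_l, dyadic_l, hpow, div_div_div_cancel_left' _ _ this.ne',
      mul_div_cancel_left₀ _ (by positivity), Real.logb_pow, Real.logb_self_eq_one one_lt_two,
      mul_one]
  rw [hlog, ENNReal.ofReal_natCast, mul_comm, tsum_subtype_ite_eq_card_mul _ hancestors,
    Finset.card_image_of_injective _ hf, Nat.card_Ico]

end

theorem stmt15_general {d : ℕ} (E : Set (EuclideanSpace ℝ (Fin d)))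
    (hE0 : volume (closure E) = 0) (R M : Cube d) (hM : IsLargestEmptyDyadic R E M) :
    ∑' Q : {Q : Cube d // IsDyadicSubcube R Q ∧ (Q.set ∩ E).Nonempty ∧
        volume Q.set ≤ volume M.set}, volume Q.1.set
      = ∑' Q' : {Q' : Cube d // IsMaxEmpty R E Q'},
          volume Q'.1.set * ENNReal.ofReal (Real.logb 2 (M.l / Q'.1.l)) := by
  classical
  calc _ = ∑' Q : {Q : Cube d // IsDyadicSubcube R Q ∧ (Q.set ∩ E).Nonempty ∧
          volume Q.set ≤ volume M.set}, ∑' Q' : {Q' : Cube d // IsMaxEmpty R E Q'},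
          if Q'.1.set ⊆ Q.1.set then volume Q'.1.set else 0 :=
        tsum_congr fun Q => volume_eq_tsum_isMaxEmpty hE0 Q.2.1 Q.2.2.1
    _ = _ := ENNReal.tsum_comm.trans (tsum_congr fun Q' => tsum_ancestors_isMaxEmpty hM Q'.2)

/-- ∑_{Q ∈ 𝒟₀(R,E)} |Q| = ∑_{Q' ∈ ℱ(R,E)} |Q'| log₂(ℓ(M(R))/ℓ(Q')). -/
theorem stmt15 {d : ℕ} (E : Set (EuclideanSpace ℝ (Fin d))) (hE : E.Nonempty)
    (hE0 : volume (closure E) = 0) (R M : Cube d) (hM : IsLargestEmptyDyadic R E M) :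
    ∑' Q : {Q : Cube d // IsDyadicSubcube R Q ∧ (Q.set ∩ E).Nonempty ∧
        volume Q.set ≤ volume M.set}, volume Q.1.set
      = ∑' Q' : {Q' : Cube d // IsMaxEmpty R E Q'},
          volume Q'.1.set * ENNReal.ofReal (Real.logb 2 (M.l / Q'.1.l)) :=
  stmt15_general E hE0 R M hM
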